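/- If ‖·‖ is an L-norm on M_n(ℂ), then there exists α > 0 such that ‖A‖ = α‖A‖₁ for every normal matrix A ∈ M_n(ℂ), where ‖·‖₁ is the trace norm. -/

import Mathlib

open Matrix BigOperators ComplexOrder

/-- Square complex matrices. -/
abbrev Mat (n : ℕ) := Matrix (Fin n) (Fin n) ℂ

/-- `N` is a norm on `Mat n`. -/
def IsMatrixNorm {n : ℕ} (N : Mat n → ℝ) : Prop :=
  (∀ A, N A = 0 ↔ A = 0) ∧
  (∀ (c : ℂ) (A : Mat n), N (c • A) = ‖c‖ * N A) ∧
  (∀ A B : Mat n, N (A + B) ≤ N A + N B)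

/-- A set of matrices is C*-convex. -/
def CStarConvex {n : ℕ} (K : Set (Mat n)) : Prop :=
  ∀ (k : ℕ) (C A : Fin k → Mat n), (∀ i, A i ∈ K) →
    (∑ i, (C i)ᴴ * C i = 1) → (∑ i, (C i)ᴴ * A i * C i) ∈ K

/-- `N` is an M-norm. -/
def IsMNorm {n : ℕ} (N : Mat n → ℝ) : Prop :=
  ∀ (k : ℕ) (C X : Fin k → Mat n), (∑ i, (C i)ᴴ * C i = 1) →
    N (∑ i, (C i)ᴴ * X i * C i) ≤ ⨆ i, N (X i)

/-- `N` is an L-norm. -/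
def IsLNorm {n : ℕ} (N : Mat n → ℝ) : Prop :=
  ∀ (k : ℕ) (C : Fin k → Mat n) (X : Mat n), (∑ i, (C i)ᴴ * C i = 1) →
    ∑ i, N (C i * X * (C i)ᴴ) ≤ N X

/-- The dual norm with respect to the pairing `⟨Y|X⟩ = Tr(Yᴴ X)`. -/
noncomputable def dualNorm {n : ℕ} (N : Mat n → ℝ) (Y : Mat n) : ℝ :=
  sSup {r | ∃ X : Mat n, N X ≤ 1 ∧ r = ‖(Yᴴ * X).trace‖}

/-- The operator (spectral) norm of a matrix. -/
noncomputable def opNorm {n : ℕ} (A : Mat n) : ℝ :=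
  ‖Matrix.toEuclideanCLM (𝕜 := ℂ) (n := Fin n) A‖

/-- The trace norm `‖A‖₁ = Tr((AᴴA)^{1/2})`. -/
noncomputable def traceNorm {n : ℕ} (A : Mat n) : ℝ :=
  ((Matrix.posSemidef_conjTranspose_mul_self A).1.eigenvectorUnitary.1 *
    diagonal (fun i => ((√((Matrix.posSemidef_conjTranspose_mul_self A).1.eigenvalues i) : ℝ) : ℂ)) *
    (star (Matrix.posSemidef_conjTranspose_mul_self A).1.eigenvectorUnitary : Mat n)).trace.re

/-- The numerical radius. -/
noncomputable def numRadius {n : ℕ} (A : Mat n) : ℝ :=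
  sSup {r | ∃ x : EuclideanSpace ℂ (Fin n), ‖x‖ = 1 ∧
    r = ‖(inner ℂ x (Matrix.toEuclideanCLM (𝕜 := ℂ) (n := Fin n) A x))‖}

/-! An L-norm is unitarily invariant: the defining inequality with the single Kraus operator `U`,
and then with `Uᴴ`, gives `N (U X Uᴴ) = N X`. A normal matrix is unitarily diagonalizable
(its real and imaginary parts are commuting Hermitian matrices), so only `diagonal d` matters.
The diagonal matrix units `Eᵢᵢ` satisfy `∑ Eᵢᵢᴴ Eᵢᵢ = 1`, so the L-norm inequality gives
`∑ N (dᵢ Eᵢᵢ) ≤ N (diagonal d)`, and the triangle inequality the reverse. Permutation matrices are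
unitary, so all `N Eᵢᵢ` equal one `α > 0`, whence `N (diagonal d) = α ∑ |dᵢ|`, and `∑ |dᵢ|` is the
trace norm because `|U D Uᴴ| = U |D| Uᴴ`. -/

open Module.End ComplexStarModule

namespace LinearMap.IsSymmetric

variable {𝕜 E : Type*} [RCLike 𝕜] [NormedAddCommGroup E] [InnerProductSpace 𝕜 E]
  [FiniteDimensional 𝕜 E] {S T : E →ₗ[𝕜] E}

theorem exists_orthonormalBasis_mem_eigenspace_inf_eigenspace_of_commute
    (hS : S.IsSymmetric) (hT : T.IsSymmetric) (hST : Commute S T) {n : ℕ}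
    (hn : Module.finrank 𝕜 E = n) :
    ∃ b : OrthonormalBasis (Fin n) 𝕜 E, ∀ j, ∃ μ ν : 𝕜,
      b j ∈ eigenspace S μ ⊓ eigenspace T ν := by
  classical
  let V : 𝕜 × 𝕜 → Submodule 𝕜 E := fun p => eigenspace S p.2 ⊓ eigenspace T p.1
  have hV : OrthogonalFamily 𝕜 (fun p => V p) fun p => (V p).subtypeₗᵢ :=
    orthogonalFamily_eigenspace_inf_eigenspace hS hT
  -- only finitely many joint eigenspaces are nonzero; index the decomposition by those
  let _ : Fintype {p // V p ≠ ⊥} := hV.independent.fintypeNeBotOfFiniteDimensional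
  have hV' := hV.comp (f := ((↑) : {p // V p ≠ ⊥} → 𝕜 × 𝕜)) Subtype.val_injective
  have hint : DirectSum.IsInternal fun p : {p // V p ≠ ⊥} => V p := by
    refine hV'.isInternal_iff.mpr ?_
    rw [iSup_ne_bot_subtype V, iSup_prod, iSup_comm,
      iSup_iSup_eigenspace_inf_eigenspace_eq_top_of_commute hS hT hST,
      Submodule.top_orthogonal_eq_bot]
  exact ⟨hint.subordinateOrthonormalBasis hn hV', fun j => ⟨_, _,
    hint.subordinateOrthonormalBasis_subordinate hn j hV'⟩⟩

end LinearMap.IsSymmetric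

namespace CFC

variable {A : Type*} [Ring A] [StarRing A] [TopologicalSpace A] [Algebra ℝ A]
  [ContinuousFunctionalCalculus ℝ A IsSelfAdjoint]
  [PartialOrder A] [StarOrderedRing A] [NonnegSpectrumClass ℝ A]
  [IsTopologicalRing A] [T2Space A]

theorem abs_unitary_conj (a : A) {u : A} (hu : u ∈ unitary A) :
    abs (u * a * star u) = u * abs a * star u := by
  refine sqrt_unique ?_ (star_right_conjugate_nonneg (abs_nonneg a) u)
  have hu' : star u * u = 1 := Unitary.star_mul_self_of_mem hu
  calc u * abs a * star u * (u * abs a * star u)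
      = u * (abs a * (star u * u) * abs a) * star u := by noncomm_ring
    _ = u * star a * (star u * u) * a * star u := by
      rw [hu', mul_one, abs_mul_abs, mul_one]; noncomm_ring
    _ = star (u * a * star u) * (u * a * star u) := by
      simp only [star_mul, star_star]; noncomm_ring

end CFC

namespace Matrix

open scoped MatrixOrder

variable {m : Type*} [Fintype m] [DecidableEq m]

theorem exists_orthonormalBasis_mulVec_eq_smul_of_isStarNormal (A : Matrix m m ℂ)
    [IsStarNormal A] :
    ∃ (b : OrthonormalBasis m ℂ (EuclideanSpace ℂ m)) (μ : m → ℂ),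
      ∀ j, A *ᵥ b j = μ j • b j := by
  have hsymm (X : selfAdjoint (Matrix m m ℂ)) :
      (toEuclideanLin (X : Matrix m m ℂ)).IsSymmetric :=
    isSymmetric_toEuclideanLin_iff.mpr X.2
  have hcomm :
      Commute (toEuclideanLin (ℜ A : Matrix m m ℂ)) (toEuclideanLin (ℑ A : Matrix m m ℂ)) :=
    (Commute.realPart_imaginaryPart A).map (toLpLinAlgEquiv 2)
  obtain ⟨b, hb⟩ := (hsymm (ℜ A)).exists_orthonormalBasis_mem_eigenspace_inf_eigenspace_of_commute
    (hsymm (ℑ A)) hcomm finrank_euclideanSpace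
  choose μ ν hμν using hb
  have mulVec_eq {X : Matrix m m ℂ} {c : ℂ} {v : EuclideanSpace ℂ m}
      (h : v ∈ eigenspace (toEuclideanLin X) c) : X *ᵥ v = c • v := by
    simpa using congr(WithLp.ofLp $(mem_eigenspace_iff.mp h))
  let e := Fintype.equivFin m
  refine ⟨b.reindex e.symm, fun j => μ (e j) + Complex.I * ν (e j), fun j => ?_⟩
  obtain ⟨hμ, hν⟩ := hμν (e j)
  conv_lhs => rw [← realPart_add_I_smul_imaginaryPart A]
  rw [OrthonormalBasis.reindex_apply, Equiv.symm_symm, add_mulVec, smul_mulVec, mulVec_eq hμ,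
    mulVec_eq hν, smul_smul, add_smul]

theorem exists_unitary_eq_conjStarAlgAut_diagonal (A : Matrix m m ℂ) [IsStarNormal A] :
    ∃ (U : unitaryGroup m ℂ) (d : m → ℂ), A = Unitary.conjStarAlgAut ℂ _ U (diagonal d) := by
  obtain ⟨b, μ, hb⟩ := exists_orthonormalBasis_mulVec_eq_smul_of_isStarNormal A
  let U : unitaryGroup m ℂ := ⟨(EuclideanSpace.basisFun m ℂ).toBasis.toMatrix b.toBasis,
    (EuclideanSpace.basisFun m ℂ).toMatrix_orthonormalBasis_mem_unitary b⟩
  have hU (j : m) : (U : Matrix m m ℂ) *ᵥ Pi.single j 1 = b j := by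
    rw [mulVec_single_one]; rfl
  refine ⟨U, μ, ?_⟩
  rw [← StarAlgEquiv.symm_apply_eq, Unitary.conjStarAlgAut_symm_apply]
  have hU' (j : m) : star (U : Matrix m m ℂ) *ᵥ b j = Pi.single j 1 := by
    rw [← hU, mulVec_mulVec, Unitary.coe_star_mul_self, one_mulVec]
  apply toEuclideanLin.injective <| (EuclideanSpace.basisFun m ℂ).toBasis.ext fun j ↦ ?_
  ext1
  simp [hU, hb, hU', Pi.single_apply]

theorem abs_diagonal (d : m → ℂ) : CFC.abs (diagonal d) = diagonal (fun i => (‖d i‖ : ℂ)) := by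
  refine CFC.sqrt_unique ?_ ?_
  · rw [star_eq_conjTranspose, diagonal_conjTranspose, diagonal_mul_diagonal, diagonal_mul_diagonal]
    congr 1
    funext i
    simp [Complex.conj_mul', sq]
  · rw [nonneg_iff_posSemidef, posSemidef_diagonal_iff]
    intro i
    exact_mod_cast norm_nonneg (d i)

theorem permMatrix_mem_unitaryGroup (σ : Equiv.Perm m) : σ.permMatrix ℂ ∈ unitaryGroup m ℂ := by
  rw [mem_unitaryGroup_iff, star_eq_conjTranspose, conjTranspose_permMatrix, ← permMatrix_mul,
    inv_mul_cancel, permMatrix_one]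

end Matrix

open scoped MatrixOrder in
theorem traceNorm_eq_re_trace_abs {n : ℕ} (A : Mat n) : traceNorm A = (CFC.abs A).trace.re := by
  have hA := posSemidef_conjTranspose_mul_self A
  rw [CFC.abs, star_eq_conjTranspose, CFC.sqrt_eq_real_sqrt _ hA.nonneg, cfcₙ_eq_cfc,
    hA.1.cfc_eq, IsHermitian.cfc, Unitary.conjStarAlgAut_apply, traceNorm]
  rfl

open scoped MatrixOrder in
theorem traceNorm_conjStarAlgAut_diagonal {n : ℕ} (U : unitaryGroup (Fin n) ℂ)
    (d : Fin n → ℂ) :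
    traceNorm (Unitary.conjStarAlgAut ℂ _ U (diagonal d)) = ∑ i, ‖d i‖ := by
  rw [traceNorm_eq_re_trace_abs, Unitary.conjStarAlgAut_apply, CFC.abs_unitary_conj _ U.2,
    trace_mul_cycle, Unitary.coe_star_mul_self, one_mul, abs_diagonal, trace_diagonal]
  simp

namespace IsMatrixNorm

variable {n : ℕ} {N : Mat n → ℝ}

theorem map_zero (hN : IsMatrixNorm N) : N 0 = 0 :=
  (hN.1 0).2 rfl

theorem nonneg (hN : IsMatrixNorm N) (X : Mat n) : 0 ≤ N X := by
  have hneg : N (-X) = N X := by simpa using hN.2.1 (-1) X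
  have := hN.2.2 X (-X)
  rw [add_neg_cancel, hN.map_zero, hneg] at this
  linarith

theorem pos (hN : IsMatrixNorm N) {X : Mat n} (hX : X ≠ 0) : 0 < N X :=
  (hN.nonneg X).lt_of_ne fun h => hX ((hN.1 X).1 h.symm)

theorem sum_le (hN : IsMatrixNorm N) {ι : Type*} (s : Finset ι) (f : ι → Mat n) :
    N (∑ i ∈ s, f i) ≤ ∑ i ∈ s, N (f i) :=
  Finset.le_sum_of_subadditive N hN.map_zero.le hN.2.2 s f

end IsMatrixNorm

namespace IsLNorm

variable {n : ℕ} {N : Mat n → ℝ}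

theorem apply_conjStarAlgAut_le (hL : IsLNorm N) (U : unitaryGroup (Fin n) ℂ) (X : Mat n) :
    N (Unitary.conjStarAlgAut ℂ _ U X) ≤ N X := by
  simpa [star_eq_conjTranspose] using hL 1 (fun _ => U) X (by simp [← star_eq_conjTranspose])

theorem apply_conjStarAlgAut (hL : IsLNorm N) (U : unitaryGroup (Fin n) ℂ) (X : Mat n) :
    N (Unitary.conjStarAlgAut ℂ _ U X) = N X := by
  refine le_antisymm (hL.apply_conjStarAlgAut_le U X) ?_
  have := hL.apply_conjStarAlgAut_le (star U) (Unitary.conjStarAlgAut ℂ _ U X)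
  rwa [← Unitary.conjStarAlgAut_mul_apply, Unitary.star_mul_self, map_one] at this

theorem apply_submatrix_equiv (hL : IsLNorm N) (σ : Equiv.Perm (Fin n)) (X : Mat n) :
    N (X.submatrix σ σ) = N X := by
  have := hL.apply_conjStarAlgAut ⟨_, permMatrix_mem_unitaryGroup σ⟩ X
  rwa [Unitary.conjStarAlgAut_apply, star_eq_conjTranspose, conjTranspose_permMatrix,
    PEquiv.toMatrix_toPEquiv_mul, PEquiv.mul_toMatrix_toPEquiv, submatrix_submatrix] at this

theorem apply_single_one_eq (hL : IsLNorm N) (i j : Fin n) :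
    N (single i i 1) = N (single j j 1) := by
  simpa using hL.apply_submatrix_equiv (Equiv.swap i j) (single j j 1)

theorem apply_diagonal (hN : IsMatrixNorm N) (hL : IsLNorm N) (d : Fin n → ℂ) :
    N (diagonal d) = ∑ i, ‖d i‖ * N (single i i 1) := by
  have hsingle (i : Fin n) : N (single i i (d i)) = ‖d i‖ * N (single i i 1) := by
    rw [← hN.2.1, smul_single, smul_eq_mul, mul_one]
  simp_rw [← hsingle]
  refine le_antisymm ?_ ?_
  · simpa only [sum_single_eq_diagonal] using hN.sum_le Finset.univ fun i => single i i (d i)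
  · have hC : ∑ i : Fin n, (single i i (1 : ℂ))ᴴ * single i i 1 = 1 := by
      simp [conjTranspose_single, sum_single_one]
    simpa [conjTranspose_single] using hL n (fun i => single i i 1) (diagonal d) hC

theorem exists_pos_forall_apply_single_one_eq (hN : IsMatrixNorm N) (hL : IsLNorm N) :
    ∃ α : ℝ, 0 < α ∧ ∀ i : Fin n, N (single i i 1) = α := by
  rcases isEmpty_or_nonempty (Fin n) with hn | hn
  · exact ⟨1, one_pos, isEmptyElim⟩
  obtain ⟨i₀⟩ := hn
  refine ⟨N (single i₀ i₀ 1), hN.pos fun h => ?_, fun i => hL.apply_single_one_eq i i₀⟩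
  simpa using congr($h i₀ i₀)

end IsLNorm

theorem LNorm_eq_traceNorm_on_normal {n : ℕ} (N : Mat n → ℝ)
    (hN : IsMatrixNorm N) (hL : IsLNorm N) :
    ∃ α : ℝ, 0 < α ∧ ∀ A : Mat n, Aᴴ * A = A * Aᴴ → N A = α * traceNorm A := by
  obtain ⟨α, hα, hsingle⟩ := hL.exists_pos_forall_apply_single_one_eq hN
  refine ⟨α, hα, fun A hA => ?_⟩
  have : IsStarNormal A := ⟨hA⟩
  obtain ⟨U, d, rfl⟩ := A.exists_unitary_eq_conjStarAlgAut_diagonal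
  rw [hL.apply_conjStarAlgAut, hL.apply_diagonal hN, traceNorm_conjStarAlgAut_diagonal,
    Finset.mul_sum]
  simp_rw [hsingle, mul_comm]
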